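/- arXiv:1506.06069 — 2 statements merged into one kernel-verified Lean document; each statement's English description precedes it below -/
import Mathlib

section
/- Let Y = {Y_1,…,Y_s} be a partition of H and Z = {Z_1,…,Z_t} be a partition of N, with Z_{k*} a block of Z of maximal size. If there exists a resolute refinement of the Pareto social choice correspondence Par which is Y-anonymous, Z-neutral and immune to the reversal bias, then gcd( gcd(|Y_1|,…,|Y_s|), lcm((|Z_{k*}|)!, 2) ) = 1. -/
/-!
Common framework: preferences on `n ≥ 2` alternatives (`Fin n`) expressed by `h ≥ 2`
individuals (`Fin h`).  Following the paper, a linear order `q ∈ L(N)` is identified with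
the permutation of `Fin n` sending each rank position (`0` = best) to the alternative
occupying that position.
-/

/-- A preference relation (a linear order on the set `Fin n` of alternatives), identified
with the permutation sending each rank position (`0` = best) to the alternative at
that position. -/
abbrev Pref (n : ℕ) := Equiv.Perm (Fin n)

/-- `x ⪰_q y` : alternative `x` is weakly preferred to `y` in `q`. -/
def prefGE {n : ℕ} (q : Pref n) (x y : Fin n) : Prop := q.symm x ≤ q.symm y

/-- `x ≻_q y` : alternative `x` is strictly preferred to `y` in `q`. -/
def prefGT {n : ℕ} (q : Pref n) (x y : Fin n) : Prop := q.symm x < q.symm y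

instance {n : ℕ} (q : Pref n) (x y : Fin n) : Decidable (prefGT q x y) :=
  inferInstanceAs (Decidable (q.symm x < q.symm y))

/-- A preference profile: one preference relation for each individual. -/
abbrev Profile (n h : ℕ) := Fin h → Pref n

/-- A social choice correspondence (the nonemptiness of its values is `IsSCC`). -/
abbrev SCC (n h : ℕ) := Profile n h → Set (Fin n)

/-- `C` has nonempty values, i.e. `C` really is a social choice correspondence. -/
def IsSCC {n h : ℕ} (C : SCC n h) : Prop := ∀ p, (C p).Nonempty

/-- `C` is resolute: it always selects exactly one alternative. -/
def Resolute {n h : ℕ} (C : SCC n h) : Prop := ∀ p, ∃ x, C p = {x}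

/-- `C'` is a refinement of `C`. -/
def Refines {n h : ℕ} (C' C : SCC n h) : Prop := ∀ p, C' p ⊆ C p

/-- The order-reversing permutation `ρ₀ : r ↦ n - r + 1`. -/
def rho0 (n : ℕ) : Equiv.Perm (Fin n) := Fin.revPerm

/-- The profile `p^{(id,id,ρ₀)}` obtained from `p` by reversing every individual
preference. -/
def revProfile {n h : ℕ} (p : Profile n h) : Profile n h := fun i => p i * rho0 n

/-- `C` is immune to the reversal bias. -/
def Immune {n h : ℕ} (C : SCC n h) : Prop :=
  ∀ (p : Profile n h) (x : Fin n), C p = {x} → C (revProfile p) ≠ C p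

/-- `Y` is a partition: nonempty, pairwise disjoint, covering blocks. -/
def IsPartition {α : Type*} {s : ℕ} (Y : Fin s → Finset α) : Prop :=
  (∀ j, (Y j).Nonempty) ∧ (∀ j k, j ≠ k → Disjoint (Y j) (Y k)) ∧ (∀ a, ∃ j, a ∈ Y j)

/-- The Pareto social choice correspondence: `x` is selected iff no alternative
unanimously beats it, i.e. for every other `y` some individual prefers `x` to `y`. -/
def Par {n h : ℕ} : SCC n h :=
  fun p => {x | ∀ y, y ≠ x → ∃ i, prefGT (p i) x y}

/-- The profile `p^{(φ,ψ,ρ)}`: individual `i` is renamed `φ(i)`, alternative `x` is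
renamed `ψ(x)`, ranks are moved by `ρ`. -/
def pact {n h : ℕ} (φ : Equiv.Perm (Fin h)) (ψ ρ : Equiv.Perm (Fin n))
    (p : Profile n h) : Profile n h :=
  fun i => ψ * p (φ⁻¹ i) * ρ

/-- Anonymity with respect to the partition `Y` of the individuals. -/
def YAnonymous {n h s : ℕ} (Y : Fin s → Finset (Fin h)) (C : SCC n h) : Prop :=
  ∀ (p : Profile n h) (φ : Equiv.Perm (Fin h)),
    (∀ j, (Y j).image φ = Y j) → C (pact φ 1 1 p) = C p

/-- Neutrality with respect to the partition `Z` of the alternatives. -/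
def ZNeutral {n h t : ℕ} (Z : Fin t → Finset (Fin n)) (C : SCC n h) : Prop :=
  ∀ (p : Profile n h) (ψ : Equiv.Perm (Fin n)),
    (∀ k, (Z k).image ψ = Z k) → C (pact 1 ψ 1 p) = ψ '' C p


/-!
Suppose a prime `q` divides every `|Y_j|`. Cutting each block of `Y` into `q`-cycles gives
`φ ∈ V(Y)` that shifts a `ZMod q`-labelling `a` of the individuals by one.

If `q ≤ |Z_{k*}|`, let `ψ` be a `q`-cycle on a `q`-subset `T ⊆ Z_{k*}` and let individual `i`
rank `T` on top, in the order `ψ ^ a i * p₀`. Renaming individuals by `φ` and alternatives by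
`ψ` gives back the same profile, so the chosen alternative, which lies in `T` by Pareto, is
fixed by `ψ`: impossible, as `ψ` moves every point of `T`.

If `q = 2`, let individual `i` hold `ρ₀ ^ a i`: reversing this profile is undone by `φ`, so
anonymity contradicts immunity to the reversal bias. A prime dividing `lcm(|Z_{k*}|!, 2)` is
`≤ |Z_{k*}|` or equal to `2`.
-/

lemma pow_mod_of_pow_eq_one {G : Type*} [Monoid G] {g : G} {q : ℕ} (hg : g ^ q = 1) (k : ℕ) :
    g ^ (k % q) = g ^ k := by
  rw [← pow_mod_orderOf, Nat.mod_mod_of_dvd _ (orderOf_dvd_of_pow_eq_one hg), pow_mod_orderOf]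

lemma pow_val_add_one {G : Type*} [Monoid G] {g : G} {q : ℕ} [NeZero q] (hg : g ^ q = 1)
    (b : ZMod q) : g ^ (b + 1).val = g * g ^ b.val := by
  have hb : b + 1 = ((b.val + 1 : ℕ) : ZMod q) := by push_cast [ZMod.natCast_zmod_val]; rfl
  rw [hb, ZMod.val_natCast, pow_mod_of_pow_eq_one hg, pow_succ']

lemma pow_val_shift {ι G : Type*} [Monoid G] {g : G} {q : ℕ} [NeZero q] (hg : g ^ q = 1)
    {φ : Equiv.Perm ι} {a : ι → ZMod q} (ha : ∀ x, a (φ x) = a x + 1) (i : ι) :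
    g * g ^ (a (φ⁻¹ i)).val = g ^ (a i).val := by
  rw [← pow_val_add_one hg, ← ha, Equiv.Perm.inv_def, Equiv.apply_symm_apply]

lemma exists_fiberwise_perm_shift {α β : Type*} [Fintype α] [DecidableEq β] (f : α → β)
    (q : ℕ) [NeZero q] (hdvd : ∀ b, q ∣ Fintype.card {x // f x = b}) :
    ∃ (φ : Equiv.Perm α) (a : α → ZMod q), (∀ x, f (φ x) = f x) ∧ ∀ x, a (φ x) = a x + 1 := by
  have e : ∀ b, {x // f x = b} ≃ ZMod q × Fin (Fintype.card {x // f x = b} / q) := fun b =>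
    Fintype.equivOfCardEq (by simp [ZMod.card, Nat.mul_div_cancel' (hdvd b)])
  let E : α ≃ Σ b, ZMod q × Fin (Fintype.card {x // f x = b} / q) :=
    (Equiv.sigmaFiberEquiv f).symm.trans (Equiv.sigmaCongrRight e)
  let S : Equiv.Perm (Σ b, ZMod q × Fin (Fintype.card {x // f x = b} / q)) :=
    Equiv.sigmaCongrRight fun _ => Equiv.prodCongr (Equiv.addRight 1) (Equiv.refl _)
  have hE : ∀ x, (E x).1 = f x := fun _ => rfl
  have hφ : ∀ x, E (E.symm.permCongr S x) = S (E x) := fun x => by simp [Equiv.permCongr_apply]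
  refine ⟨E.symm.permCongr S, fun x => (E x).2.1, fun x => ?_, fun x => ?_⟩
  · rw [← hE, hφ, ← hE]; rfl
  · exact congrArg (fun y => y.2.1) (hφ x)

lemma Finset.image_perm_eq_of_mapsTo {α : Type*} [DecidableEq α] {s : Finset α}
    {σ : Equiv.Perm α} (hσ : ∀ x ∈ s, σ x ∈ s) : s.image σ = s :=
  Finset.eq_of_subset_of_card_le (Finset.image_subset_iff.mpr hσ)
    (Finset.card_image_of_injective _ σ.injective).ge

lemma IsPartition.eq_of_mem {α : Type*} {s : ℕ} {Y : Fin s → Finset α} (hY : IsPartition Y)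
    {a : α} {j k : Fin s} (hj : a ∈ Y j) (hk : a ∈ Y k) : j = k := by
  by_contra hjk
  exact Finset.disjoint_left.mp (hY.2.1 j k hjk) hj hk

lemma IsPartition.exists_perm_shift {α : Type*} [Fintype α] [DecidableEq α] {s : ℕ}
    {Y : Fin s → Finset α} (hY : IsPartition Y) (q : ℕ) [NeZero q] (hdvd : ∀ j, q ∣ (Y j).card) :
    ∃ (φ : Equiv.Perm α) (a : α → ZMod q), (∀ j, (Y j).image φ = Y j) ∧ ∀ x, a (φ x) = a x + 1 := by
  choose blk hblk using hY.2.2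
  have hmem : ∀ x j, x ∈ Y j ↔ blk x = j :=
    fun x j => ⟨fun hx => hY.eq_of_mem (hblk x) hx, fun h => h ▸ hblk x⟩
  have hfiber : ∀ j, Fintype.card {x // blk x = j} = (Y j).card := fun j => by
    rw [Fintype.card_subtype]
    congr 1
    ext x
    simp [hmem]
  obtain ⟨φ, a, hφ, ha⟩ := exists_fiberwise_perm_shift blk q (by simpa [hfiber] using hdvd)
  exact ⟨φ, a, fun j => Finset.image_perm_eq_of_mapsTo fun x hx => by
    rw [hmem] at hx ⊢; rwa [hφ], ha⟩

lemma Finset.exists_perm_cycle {α : Type*} [Fintype α] [DecidableEq α] (T : Finset α)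
    (hT : 2 ≤ T.card) :
    ∃ ψ : Equiv.Perm α, ψ.support = T ∧ ψ ^ T.card = 1 := by
  refine ⟨T.toList.formPerm, ?_, ?_⟩
  · rw [List.support_formPerm_of_nodup _ T.nodup_toList, Finset.toList_toFinset]
    rintro x hx
    have hlen := congrArg List.length hx
    simp only [Finset.length_toList, List.length_singleton] at hlen
    omega
  · simpa using List.formPerm_pow_length_eq_one_of_nodup _ T.nodup_toList

def RanksOnTop {n : ℕ} (q : Pref n) (T : Finset (Fin n)) : Prop :=
  ∀ u ∈ T, ∀ v ∉ T, prefGT q u v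

lemma exists_ranksOnTop {n : ℕ} (T : Finset (Fin n)) : ∃ q : Pref n, RanksOnTop q T := by
  have hT : T.card ≤ n := by simpa using T.card_le_univ
  have hcard : Fintype.card {x // x ∈ T} = Fintype.card {r : Fin n // (r : ℕ) < T.card} := by
    rw [Fintype.card_fin_lt_of_le hT, Fintype.card_coe]
  have hcard' : Fintype.card {x // x ∉ T} = Fintype.card {r : Fin n // ¬(r : ℕ) < T.card} := by
    rw [Fintype.card_subtype_compl, Fintype.card_subtype_compl, hcard]
  let σ := Equiv.subtypeCongr (Fintype.equivOfCardEq hcard) (Fintype.equivOfCardEq hcard')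
  refine ⟨σ.symm, fun u hu v hv => ?_⟩
  have hu' : ((σ u : Fin n) : ℕ) < T.card := by
    simpa [σ, Equiv.subtypeCongr, Equiv.sumCompl_symm_apply_of_pos hu] using
      (Fintype.equivOfCardEq hcard ⟨u, hu⟩).2
  have hv' : ¬((σ v : Fin n) : ℕ) < T.card := by
    simpa [σ, Equiv.subtypeCongr, Equiv.sumCompl_symm_apply_of_neg hv] using
      (Fintype.equivOfCardEq hcard' ⟨v, hv⟩).2
  show σ u < σ v
  rw [Fin.lt_def]
  omega

lemma RanksOnTop.mul_left {n : ℕ} {q : Pref n} {T : Finset (Fin n)} (hq : RanksOnTop q T)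
    {σ : Equiv.Perm (Fin n)} (hσ : ∀ x, σ x ∈ T ↔ x ∈ T) : RanksOnTop (σ * q) T := by
  intro u hu v hv
  have hσ' : ∀ x, σ.symm x ∈ T ↔ x ∈ T := fun x => by rw [← hσ, Equiv.apply_symm_apply]
  exact hq _ ((hσ' u).mpr hu) _ (mt (hσ' v).mp hv)

lemma Par_subset_of_ranksOnTop {n h : ℕ} {p : Profile n h} {T : Finset (Fin n)}
    (hT : T.Nonempty) (hp : ∀ i, RanksOnTop (p i) T) : Par p ⊆ T := by
  intro x hx
  by_contra hxT
  obtain ⟨t, ht⟩ := hT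
  obtain ⟨i, hi⟩ := hx t (by rintro rfl; exact hxT ht)
  exact lt_asymm hi (hp i t ht x hxT)

theorem not_forall_dvd_card_of_neutral {h n s t q : ℕ} (hq : 2 ≤ q)
    {Y : Fin s → Finset (Fin h)} (hY : IsPartition Y)
    {Z : Fin t → Finset (Fin n)} (hZ : IsPartition Z) {k : Fin t} (hqZ : q ≤ (Z k).card)
    {C : SCC n h} (hres : Resolute C) (href : Refines C Par)
    (hanon : YAnonymous Y C) (hneut : ZNeutral Z C) : ¬∀ j, q ∣ (Y j).card := by
  intro hqY
  have : NeZero q := ⟨by omega⟩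
  obtain ⟨φ, a, hφY, hφa⟩ := hY.exists_perm_shift q hqY
  obtain ⟨T, hTZ, hTq⟩ := Finset.exists_subset_card_eq hqZ
  obtain ⟨ψ, hψT, hψq⟩ := T.exists_perm_cycle (hTq ▸ hq)
  rw [hTq] at hψq
  obtain ⟨p₀, hp₀⟩ := exists_ranksOnTop T
  let p : Profile n h := fun i => ψ ^ (a i).val * p₀
  have hψZ : ∀ k', (Z k').image ψ = Z k' := fun k' =>
    Finset.image_perm_eq_of_mapsTo fun x hx => by
      by_cases hxT : x ∈ T
      · obtain rfl := hZ.eq_of_mem hx (hTZ hxT)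
        exact hTZ (hψT ▸ Equiv.Perm.apply_mem_support.mpr (hψT ▸ hxT))
      · rwa [Equiv.Perm.notMem_support.mp (hψT ▸ hxT)]
  have hp : pact 1 ψ 1 (pact φ 1 1 p) = p := funext fun i => by
    simp only [pact, p, one_mul, mul_one, inv_one, Equiv.Perm.one_apply]
    rw [← mul_assoc, pow_val_shift hψq hφa]
  obtain ⟨x, hx⟩ := hres p
  have hxT : x ∈ T := by
    refine Par_subset_of_ranksOnTop (Finset.card_pos.mp (by omega))
      (fun i => hp₀.mul_left fun y => ?_) (href p (hx ▸ rfl))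
    rw [← hψT]
    exact Equiv.Perm.pow_apply_mem_support
  have hψx : ψ x = x := by
    have h := hneut (pact φ 1 1 p) ψ hψZ
    rw [hp, hanon p φ hφY, hx, Set.image_singleton] at h
    exact (Set.singleton_eq_singleton_iff.mp h).symm
  exact Equiv.Perm.mem_support.mp (hψT ▸ hxT) hψx

theorem not_forall_two_dvd_card_of_immune {h n s : ℕ}
    {Y : Fin s → Finset (Fin h)} (hY : IsPartition Y) {C : SCC n h} (hres : Resolute C)
    (hanon : YAnonymous Y C) (himm : Immune C) : ¬∀ j, 2 ∣ (Y j).card := by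
  intro h2Y
  obtain ⟨φ, a, hφY, hφa⟩ := hY.exists_perm_shift 2 h2Y
  have hρ : rho0 n ^ 2 = 1 := by ext x; simp [sq, rho0]
  let p : Profile n h := fun i => rho0 n ^ (a i).val
  have hp : pact φ 1 1 (revProfile p) = p := funext fun i => by
    simp only [pact, revProfile, p, one_mul, mul_one]
    rw [pow_mul_comm', pow_val_shift hρ hφa]
  obtain ⟨x, hx⟩ := hres p
  exact himm p x hx (by rw [← hanon _ φ hφY, hp])

theorem statement1_general {h n s t : ℕ}
    (Y : Fin s → Finset (Fin h)) (hY : IsPartition Y)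
    (Z : Fin t → Finset (Fin n)) (hZ : IsPartition Z)
    (kstar : Fin t)
    (C : SCC n h) (hres : Resolute C) (href : Refines C Par)
    (hanon : YAnonymous Y C) (hneut : ZNeutral Z C) (himm : Immune C) :
    Nat.gcd (Finset.univ.gcd fun j => (Y j).card)
      (Nat.lcm (Nat.factorial (Z kstar).card) 2) = 1 := by
  by_contra hne
  obtain ⟨q, hq, hqdvd⟩ := Nat.exists_prime_and_dvd hne
  have hqY : ∀ j, q ∣ (Y j).card := fun j =>
    (hqdvd.trans (Nat.gcd_dvd_left _ _)).trans (Finset.gcd_dvd (Finset.mem_univ j))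
  have hqL : q ∣ (Z kstar).card.factorial * 2 :=
    (hqdvd.trans (Nat.gcd_dvd_right _ _)).trans (Nat.lcm_dvd_mul _ _)
  rcases hq.dvd_mul.mp hqL with hfac | htwo
  · exact not_forall_dvd_card_of_neutral hq.two_le hY hZ (hq.dvd_factorial.mp hfac)
      hres href hanon hneut hqY
  · obtain rfl := (Nat.prime_dvd_prime_iff_eq hq Nat.prime_two).mp htwo
    exact not_forall_two_dvd_card_of_immune hY hres hanon himm hqY

/-- Theorem `super`(ii): if the Pareto scc admits a resolute refinement
which is `Y`-anonymous, `Z`-neutral and immune to the reversal bias, then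
`gcd(gcd(|Y_1|,…,|Y_s|), lcm((|Z_{k*}|)!, 2)) = 1`. -/
theorem statement1 {h n s t : ℕ} (hh : 2 ≤ h) (hn : 2 ≤ n)
    (Y : Fin s → Finset (Fin h)) (hY : IsPartition Y)
    (Z : Fin t → Finset (Fin n)) (hZ : IsPartition Z)
    (kstar : Fin t) (hks : ∀ k, (Z k).card ≤ (Z kstar).card)
    (C : SCC n h) (hres : Resolute C) (href : Refines C Par)
    (hanon : YAnonymous Y C) (hneut : ZNeutral Z C) (himm : Immune C) :
    Nat.gcd (Finset.univ.gcd fun j => (Y j).card)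
      (Nat.lcm (Nat.factorial (Z kstar).card) 2) = 1 :=
  statement1_general Y hY Z hZ kstar C hres href hanon hneut himm
end

section
/- If U is a regular subgroup of G = S_h × S_n × Ω, then every U-consistent social choice correspondence admits a resolute U-consistent refinement. -/
/-- The ambient group `S_h × S_n × S_n` (the third component is meant to range in `Ω`). -/
abbrev Amb (n h : ℕ) := Equiv.Perm (Fin h) × Equiv.Perm (Fin n) × Equiv.Perm (Fin n)

/-- The action `p ↦ p^g` of `g = (φ,ψ,ρ)` on profiles. -/
def gact {n h : ℕ} (g : Amb n h) (p : Profile n h) : Profile n h :=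
  fun i => g.2.1 * p (g.1⁻¹ i) * g.2.2

/-- The group `Ω = {id, ρ₀}`. -/
def OmegaGrp (n : ℕ) : Subgroup (Equiv.Perm (Fin n)) := Subgroup.zpowers (rho0 n)

/-- The group `G = S_h × S_n × Ω`. -/
def bigG (n h : ℕ) : Subgroup (Amb n h) :=
  (⊤ : Subgroup (Equiv.Perm (Fin h))).prod
    ((⊤ : Subgroup (Equiv.Perm (Fin n))).prod (OmegaGrp n))

/-- `U`-consistency of a social choice correspondence `C`: for every `p` and every
`(φ,ψ,ρ) ∈ U`, if `ρ = id` then `C(p^{(φ,ψ,id)}) = ψ C(p)`, and if `ρ = ρ₀` and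
`|C(p)| = 1` then `C(p^{(φ,ψ,ρ₀)}) ≠ ψ C(p)`. -/
def UConsistent {n h : ℕ} (U : Subgroup (Amb n h)) (C : SCC n h) : Prop :=
  ∀ (p : Profile n h), ∀ g ∈ U,
    (g.2.2 = 1 → C (gact g p) = g.2.1 '' C p) ∧
    (g.2.2 = rho0 n → ∀ x : Fin n, C p = {x} → C (gact g p) ≠ g.2.1 '' C p)

/-- A subgroup `U` of `G` is regular: for every profile `p` there is `ψ⋆ ∈ S_n`
conjugate to `ρ₀` with `Stab_U(p) ⊆ (S_h × {id} × {id}) ∪ (S_h × {ψ⋆} × {ρ₀})`. -/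
def RegularSubgroup {n h : ℕ} (U : Subgroup (Amb n h)) : Prop :=
  ∀ p : Profile n h, ∃ ψs : Equiv.Perm (Fin n), IsConj (rho0 n) ψs ∧
    ∀ g ∈ U, gact g p = p →
      (g.2.1 = 1 ∧ g.2.2 = 1) ∨ (g.2.1 = ψs ∧ g.2.2 = rho0 n)


/-!
Fix a base profile `q` in each `U`-orbit and one alternative `x ρ` for each `ρ ∈ Ω`, and let
`g = (φ, ψ, ρ) ∈ U` select `ψ (x ρ)` at `q^g`. Regularity makes this well defined: two elements
of `U` with the same `ρ` sending `q` to the same profile have the same `ψ`, and a reversing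
stabilizer of `q` acts on alternatives by a conjugate of `ρ₀`, which fixes at most one point.
Consistency for rotations is then automatic, and consistency for reversals reduces to
`x id ≠ x ρ₀`. Such `x` with values in `C` exists: if `C q = {a}`, consistency of `C` gives
`C (q^m) ≠ {ψ_m a}` for any reversing `m ∈ U`, and otherwise `C q` offers two alternatives.
-/

theorem rho0_mul_self (n : ℕ) : rho0 n * rho0 n = 1 := by
  ext i
  simp [rho0]

theorem rho0_ne_one {n : ℕ} (hn : 2 ≤ n) : rho0 n ≠ 1 := by
  intro h
  have := congrArg (fun e : Equiv.Perm (Fin n) => (e ⟨0, by omega⟩).val) h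
  simp [rho0, Fin.rev] at this
  omega

theorem eq_one_or_eq_rho0_of_mem_omegaGrp {n : ℕ} {ρ : Equiv.Perm (Fin n)}
    (hρ : ρ ∈ OmegaGrp n) : ρ = 1 ∨ ρ = rho0 n := by
  obtain ⟨k, rfl⟩ := Subgroup.mem_zpowers_iff.mp hρ
  have hsq : rho0 n ^ (2 : ℤ) = 1 := by
    rw [zpow_two, rho0_mul_self]
  rcases Int.even_or_odd' k with ⟨m, rfl | rfl⟩
  · left
    rw [zpow_mul, hsq, one_zpow]
  · right
    rw [zpow_add_one, zpow_mul, hsq, one_zpow, one_mul]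

theorem subsingleton_fixedPoints_rev (n : ℕ) :
    (Function.fixedPoints (Fin.rev : Fin n → Fin n)).Subsingleton := by
  intro a ha b hb
  have ha' := congrArg Fin.val (ha : Fin.rev a = a)
  have hb' := congrArg Fin.val (hb : Fin.rev b = b)
  rw [Fin.val_rev] at ha' hb'
  ext
  omega

theorem subsingleton_fixedPoints_of_isConj_rho0 {n : ℕ} {ψ : Equiv.Perm (Fin n)}
    (hψ : IsConj (rho0 n) ψ) : (Function.fixedPoints ψ).Subsingleton := by
  obtain ⟨c, rfl⟩ := isConj_iff.mp hψ
  intro a ha b hb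
  have key : ∀ x, (c * rho0 n * c⁻¹) x = x → Function.IsFixedPt Fin.rev (c⁻¹ x) := by
    intro x hx
    apply c.injective
    simpa [rho0] using hx
  exact c⁻¹.injective (subsingleton_fixedPoints_rev n (key a ha) (key b hb))

theorem gact_one {n h : ℕ} (p : Profile n h) : gact 1 p = p := by
  funext i
  simp [gact]

theorem gact_mul {n h : ℕ} {g g' : Amb n h} (hg : Commute g.2.2 g'.2.2) (p : Profile n h) :
    gact (g * g') p = gact g (gact g' p) := by
  funext i
  simp only [gact, Prod.fst_mul, Prod.snd_mul, mul_inv_rev, Equiv.Perm.mul_apply, hg.eq,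
    mul_assoc]

section Subgroup

variable {n h : ℕ} {U : Subgroup (Amb n h)}

theorem snd_snd_eq_one_or_rho0 (hUG : U ≤ bigG n h) {g : Amb n h} (hg : g ∈ U) :
    g.2.2 = 1 ∨ g.2.2 = rho0 n := by
  have hgG := hUG hg
  simp only [bigG, Subgroup.mem_prod] at hgG
  exact eq_one_or_eq_rho0_of_mem_omegaGrp hgG.2.2

theorem gact_mul_of_mem (hUG : U ≤ bigG n h) {g g' : Amb n h} (hg : g ∈ U) (hg' : g' ∈ U)
    (p : Profile n h) : gact (g * g') p = gact g (gact g' p) := by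
  refine gact_mul ?_ p
  rcases snd_snd_eq_one_or_rho0 hUG hg with h1 | h1 <;>
    rcases snd_snd_eq_one_or_rho0 hUG hg' with h2 | h2 <;>
    simp [h1, h2]

theorem gact_inv_gact (hUG : U ≤ bigG n h) {g : Amb n h} (hg : g ∈ U) (p : Profile n h) :
    gact g⁻¹ (gact g p) = p := by
  rw [← gact_mul_of_mem hUG (inv_mem hg) hg, inv_mul_cancel, gact_one]

theorem exists_orbit_rep (hUG : U ≤ bigG n h) :
    ∃ R : Profile n h → Profile n h, (∀ p, ∃ g ∈ U, gact g (R p) = p) ∧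
      ∀ p, ∀ g ∈ U, R (gact g p) = R p := by
  let orbitSetoid : Setoid (Profile n h) :=
    { r := fun p q => ∃ g ∈ U, gact g p = q
      iseqv :=
        { refl := fun p => ⟨1, one_mem U, gact_one p⟩
          symm := fun ⟨g, hg, hgp⟩ => ⟨g⁻¹, inv_mem hg, hgp ▸ gact_inv_gact hUG hg _⟩
          trans := fun ⟨g, hg, hgp⟩ ⟨g', hg', hg'q⟩ =>
            ⟨g' * g, mul_mem hg' hg, by rw [gact_mul_of_mem hUG hg' hg, hgp, hg'q]⟩ } }
  refine ⟨fun p => (Quotient.mk orbitSetoid p).out, fun p => ?_, fun p g hg => ?_⟩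
  · exact Quotient.exact (Quotient.out_eq (Quotient.mk orbitSetoid p))
  · exact congrArg Quotient.out
      (Quotient.sound (s := orbitSetoid) (a := p) (b := gact g p) ⟨g, hg, rfl⟩).symm

theorem RegularSubgroup.snd_fst_eq_of_gact_eq (hreg : RegularSubgroup U) (hUG : U ≤ bigG n h)
    {g g' : Amb n h} (hg : g ∈ U) (hg' : g' ∈ U) {q : Profile n h}
    (hq : gact g q = gact g' q) (hρ : g.2.2 = g'.2.2) : g.2.1 = g'.2.1 := by
  obtain ⟨ψ, hψ, hstab⟩ := hreg q
  have hfix : gact (g'⁻¹ * g) q = q := by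
    rw [gact_mul_of_mem hUG (inv_mem hg') hg, hq, gact_inv_gact hUG hg']
  have hrot : (g'⁻¹ * g).2.2 = 1 := by
    simp [hρ]
  suffices (g'⁻¹ * g).2.1 = 1 by simpa [inv_mul_eq_one, eq_comm] using this
  rcases hstab _ (mul_mem (inv_mem hg') hg) hfix with ⟨h1, -⟩ | ⟨h1, h2⟩
  · exact h1
  · -- this case forces `rho0 n = 1`, hence `ψ = 1`
    rw [h1, ← isConj_one_left, ← hrot, h2]
    exact hψ.symm

theorem RegularSubgroup.isConj_rho0_of_gact_eq_self (hreg : RegularSubgroup U) {s : Amb n h}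
    (hs : s ∈ U) {q : Profile n h} (hfix : gact s q = q) (hρ : s.2.2 = rho0 n) :
    IsConj (rho0 n) s.2.1 := by
  obtain ⟨ψ, hψ, hstab⟩ := hreg q
  rcases hstab s hs hfix with ⟨h1, h2⟩ | ⟨h1, -⟩
  · rw [h1, ← hρ, h2]
  · rwa [h1]

end Subgroup

theorem Set.Nonempty.exists_not_isFixedPt {α : Type*} {S : Set α} {σ : α → α}
    (hS : S.Nonempty) (hσ : (Function.fixedPoints σ).Subsingleton)
    (h : ∀ x, S = {x} → ¬ Function.IsFixedPt σ x) : ∃ a ∈ S, ¬ Function.IsFixedPt σ a := by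
  rcases hS.exists_eq_singleton_or_nontrivial with ⟨x, rfl⟩ | ⟨a, ha, b, hb, hab⟩
  · exact ⟨x, rfl, h x rfl⟩
  · by_contra! hfix
    exact hab (hσ (hfix a ha) (hfix b hb))

theorem Set.Nonempty.exists_mem_ne_apply {α β : Type*} {S : Set α} {T : Set β} {σ : α → β}
    (hS : S.Nonempty) (hσ : σ.Injective) (hT : T.Nonempty) (h : ∀ x, S = {x} → T ≠ {σ x}) :
    ∃ a ∈ S, ∃ b ∈ T, b ≠ σ a := by
  rcases hS.exists_eq_singleton_or_nontrivial with ⟨x, rfl⟩ | ⟨a, ha, a', ha', hne⟩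
  · rcases hT.exists_eq_singleton_or_nontrivial with ⟨y, rfl⟩ | hT
    · exact ⟨x, rfl, y, rfl, fun hy => h x rfl (by rw [hy])⟩
    · obtain ⟨b, hb, hbx⟩ := hT.exists_ne (σ x)
      exact ⟨x, rfl, b, hb, hbx⟩
  · obtain ⟨b, hb⟩ := hT
    by_cases hba : b = σ a
    · exact ⟨a', ha', b, hb, fun hba' => hne (hσ (hba.symm.trans hba'))⟩
    · exact ⟨a, ha, b, hb, hba⟩

section Selector

variable {n h : ℕ} {U : Subgroup (Amb n h)} {C : SCC n h}

/-- Relative to a base profile `q`, the element `g ∈ U` selects `g.2.1 (x g.2.2)` at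
`gact g q`. -/
structure IsOrbitSelector (U : Subgroup (Amb n h)) (C : SCC n h) (q : Profile n h)
    (x : Equiv.Perm (Fin n) → Fin n) : Prop where
  wellDefined : ∀ g ∈ U, ∀ g' ∈ U, gact g q = gact g' q →
    g.2.1 (x g.2.2) = g'.2.1 (x g'.2.2)
  mem : ∀ g ∈ U, g.2.1 (x g.2.2) ∈ C (gact g q)
  ne : ∀ g ∈ U, g.2.2 = rho0 n → x 1 ≠ x (rho0 n)

theorem exists_resolute_of_isOrbitSelector (hUG : U ≤ bigG n h)
    {R : Profile n h → Profile n h} (hR : ∀ p, ∃ g ∈ U, gact g (R p) = p)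
    (hRinv : ∀ p, ∀ g ∈ U, R (gact g p) = R p)
    {x : Profile n h → Equiv.Perm (Fin n) → Fin n} (hx : ∀ q, IsOrbitSelector U C q (x q)) :
    ∃ f : SCC n h, Resolute f ∧ Refines f C ∧ UConsistent U f := by
  choose t htU ht using hR
  let f : SCC n h := fun p => {(t p).2.1 (x (R p) (t p).2.2)}
  have hf_gact : ∀ p, ∀ g ∈ U,
      f (gact g p) = {g.2.1 ((t p).2.1 (x (R p) (g.2.2 * (t p).2.2)))} := by
    intro p g hg
    have hmap : gact (t (gact g p)) (R p) = gact (g * t p) (R p) := by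
      rw [← hRinv p g hg, ht, hRinv p g hg, gact_mul_of_mem hUG hg (htU p), ht]
    have := (hx (R p)).wellDefined _ (htU _) _ (mul_mem hg (htU p)) hmap
    simp only [f, hRinv p g hg, this]
    rfl
  refine ⟨f, fun p => ⟨_, rfl⟩, fun p => ?_,
    fun p g hg => ⟨fun hρ => ?_, fun hρ _ _ => ?_⟩⟩
  · have hmem := (hx (R p)).mem _ (htU p)
    rw [ht] at hmem
    exact Set.singleton_subset_iff.mpr hmem
  · rw [hf_gact p g hg, hρ, one_mul, Set.image_singleton]
  · rw [hf_gact p g hg, hρ, Set.image_singleton, Ne, Set.singleton_eq_singleton_iff]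
    intro heq
    have hx_eq := (t p).2.1.injective (g.2.1.injective heq)
    have hne := (hx (R p)).ne g hg hρ
    rcases snd_snd_eq_one_or_rho0 hUG (htU p) with h1 | h1 <;>
      rw [h1] at hx_eq
    · exact hne (by rwa [mul_one, eq_comm] at hx_eq)
    · exact hne (by rwa [rho0_mul_self] at hx_eq)

theorem isOrbitSelector_const (hn : 2 ≤ n) (hreg : RegularSubgroup U) (hUG : U ≤ bigG n h)
    (hcons : UConsistent U C) (hrot : ∀ g ∈ U, g.2.2 = 1) {q : Profile n h} {a : Fin n}
    (ha : a ∈ C q) : IsOrbitSelector U C q (fun _ => a) where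
  wellDefined g hg g' hg' hq := by
    rw [hreg.snd_fst_eq_of_gact_eq hUG hg hg' hq (by rw [hrot g hg, hrot g' hg'])]
  mem g hg := by
    rw [(hcons q g hg).1 (hrot g hg)]
    exact Set.mem_image_of_mem _ ha
  ne g hg hρ := absurd (hρ.symm.trans (hrot g hg)) (rho0_ne_one hn)

/-- The selector picks `a` at `q` and `b` at `gact m q`; `hstab` makes this compatible with the
reversing stabilizers of `q`. -/
theorem isOrbitSelector_of_reversal (hn : 2 ≤ n) (hreg : RegularSubgroup U)
    (hUG : U ≤ bigG n h) (hcons : UConsistent U C) {q : Profile n h} {m : Amb n h} (hm : m ∈ U)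
    (hmρ : m.2.2 = rho0 n) {a b : Fin n} (ha : a ∈ C q) (hb : b ∈ C (gact m q))
    (hab : b ≠ m.2.1 a)
    (hstab : ∀ s ∈ U, s.2.2 = rho0 n → gact s q = q → s.2.1 (m.2.1⁻¹ b) = a) :
    IsOrbitSelector U C q (fun ρ => if ρ = 1 then a else m.2.1⁻¹ b) := by
  set x : Equiv.Perm (Fin n) → Fin n := fun ρ => if ρ = 1 then a else m.2.1⁻¹ b
  have hx1 : x 1 = a := if_pos rfl
  have hx0 : x (rho0 n) = m.2.1⁻¹ b := if_neg (rho0_ne_one hn)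
  have cross : ∀ g ∈ U, ∀ g' ∈ U, g.2.2 = 1 → g'.2.2 = rho0 n → gact g q = gact g' q →
      g.2.1 a = g'.2.1 (m.2.1⁻¹ b) := by
    intro g hg g' hg' h1 h2 hq
    have hfix : gact (g⁻¹ * g') q = q := by
      rw [gact_mul_of_mem hUG (inv_mem hg) hg', ← hq, gact_inv_gact hUG hg]
    rw [← hstab _ (mul_mem (inv_mem hg) hg') (by simp [h1, h2]) hfix]
    simp
  refine ⟨fun g hg g' hg' hq => ?_, fun g hg => ?_, fun _ _ _ => ?_⟩
  · rcases snd_snd_eq_one_or_rho0 hUG hg with h1 | h1 <;>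
      rcases snd_snd_eq_one_or_rho0 hUG hg' with h2 | h2 <;>
      rw [h1, h2]
    · rw [hreg.snd_fst_eq_of_gact_eq hUG hg hg' hq (h1.trans h2.symm)]
    · rw [hx1, hx0]
      exact cross g hg g' hg' h1 h2 hq
    · rw [hx1, hx0]
      exact (cross g' hg' g hg h2 h1 hq.symm).symm
    · rw [hreg.snd_fst_eq_of_gact_eq hUG hg hg' hq (h1.trans h2.symm)]
  · rcases snd_snd_eq_one_or_rho0 hUG hg with h1 | h1
    · rw [h1, hx1, (hcons q g hg).1 h1]
      exact Set.mem_image_of_mem _ ha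
    · have hgm : gact g q = gact (g * m⁻¹) (gact m q) := by
        rw [← gact_mul_of_mem hUG (mul_mem hg (inv_mem hm)) hm, inv_mul_cancel_right]
      rw [h1, hx0, hgm, (hcons _ _ (mul_mem hg (inv_mem hm))).1 (by simp [h1, hmρ])]
      exact ⟨b, hb, rfl⟩
  · rw [hx1, hx0]
    rintro rfl
    exact hab (by simp)

theorem exists_isOrbitSelector (hn : 2 ≤ n) (hreg : RegularSubgroup U) (hUG : U ≤ bigG n h)
    (hC : IsSCC C) (hcons : UConsistent U C) (q : Profile n h) :
    ∃ x, IsOrbitSelector U C q x := by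
  by_cases hrev : ∃ m ∈ U, m.2.2 = rho0 n
  swap
  · push Not at hrev
    obtain ⟨a, ha⟩ := hC q
    exact ⟨_, isOrbitSelector_const hn hreg hUG hcons
      (fun g hg => (snd_snd_eq_one_or_rho0 hUG hg).resolve_right (hrev g hg)) ha⟩
  by_cases hstab : ∃ s ∈ U, s.2.2 = rho0 n ∧ gact s q = q
  · obtain ⟨s, hs, hsρ, hsq⟩ := hstab
    obtain ⟨a, ha, hfix⟩ := (hC q).exists_not_isFixedPt
      (subsingleton_fixedPoints_of_isConj_rho0 (hreg.isConj_rho0_of_gact_eq_self hs hsq hsρ))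
      (fun x hx hfx => (hcons q s hs).2 hsρ x hx (by rw [hsq, hx, Set.image_singleton, hfx]))
    refine ⟨_, isOrbitSelector_of_reversal hn hreg hUG hcons hs hsρ ha (by rwa [hsq])
      (fun h => hfix h.symm) fun s' hs' hs'ρ hs'q => ?_⟩
    rw [hreg.snd_fst_eq_of_gact_eq hUG hs' hs (hs'q.trans hsq.symm) (hs'ρ.trans hsρ.symm)]
    simp
  · obtain ⟨m, hm, hmρ⟩ := hrev
    obtain ⟨a, ha, b, hb, hab⟩ := (hC q).exists_mem_ne_apply m.2.1.injective (hC (gact m q))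
      fun x hx => by simpa [hx] using (hcons q m hm).2 hmρ x hx
    exact ⟨_, isOrbitSelector_of_reversal hn hreg hUG hcons hm hmρ ha hb hab
      fun s hs hsρ hsq => absurd ⟨s, hs, hsρ, hsq⟩ hstab⟩

end Selector

theorem statement6_general {n h : ℕ} (hn : 2 ≤ n)
    (U : Subgroup (Amb n h)) (hUG : U ≤ bigG n h) (hreg : RegularSubgroup U)
    (C : SCC n h) (hC : IsSCC C) (hcons : UConsistent U C) :
    ∃ f : SCC n h, Resolute f ∧ Refines f C ∧ UConsistent U f := by
  obtain ⟨R, hR, hRinv⟩ := exists_orbit_rep hUG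
  choose x hx using exists_isOrbitSelector hn hreg hUG hC hcons
  exact exists_resolute_of_isOrbitSelector hUG hR hRinv hx

/-- Theorem `general`: if `U ≤ G` is regular, then every `U`-consistent
scc admits a resolute `U`-consistent refinement. -/
theorem statement6 {n h : ℕ} (hh : 2 ≤ h) (hn : 2 ≤ n)
    (U : Subgroup (Amb n h)) (hUG : U ≤ bigG n h) (hreg : RegularSubgroup U)
    (C : SCC n h) (hC : IsSCC C) (hcons : UConsistent U C) :
    ∃ f : SCC n h, Resolute f ∧ Refines f C ∧ UConsistent U f :=
  statement6_general hn U hUG hreg C hC hcons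
end
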